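/- Let k, q ≥ 1, let F ∈ L^k_q be a k-labelled graph, and let m ≥ 0. Then there exists a formula φ_m ∈ C^k_q such that for every k-labelled graph G whose set of assigned labels contains the set of assigned labels of F, G ⊨ φ_m if and only if hom(F,G) = m. -/

import Mathlib

set_option maxHeartbeats 1000000

/-! ## Bundled finite simple graphs and homomorphism counting -/

/-- A bundled finite simple graph (vertex set `Fin n`). -/
abbrev GraphB : Type := Σ n : ℕ, SimpleGraph (Fin n)

/-- The number of graph homomorphisms from `F` to `G`. -/
noncomputable def homCount {V W : Type*} (F : SimpleGraph V) (G : SimpleGraph W) : ℕ :=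
  Set.ncard {f : V → W | ∀ ⦃u v⦄, F.Adj u v → G.Adj (f u) (f v)}

/-- `G` and `H` are homomorphism indistinguishable over the class `𝓕`. -/
def HomIndist (𝓕 : Set GraphB) {V W : Type*} (G : SimpleGraph V) (H : SimpleGraph W) : Prop :=
  ∀ A ∈ 𝓕, homCount A.2 G = homCount A.2 H

/-- The homomorphism distinguishing closure of the class `𝓕`. -/
def hdCl (𝓕 : Set GraphB) : Set GraphB :=
  {A | ∀ G H : GraphB, HomIndist 𝓕 G.2 H.2 → homCount A.2 G.2 = homCount A.2 H.2}

/-! ## Pebble forest covers and the class `T^k_q` -/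

/-- A `k`-pebble forest cover of depth at most `q`.  The rooted forest is encoded by its
ancestor (partial) order `le`, in which the set of ancestors of any vertex is a chain. -/
structure PebbleForestCover {V : Type*} (G : SimpleGraph V) (k q : ℕ) where
  le : V → V → Prop
  le_refl : ∀ v, le v v
  le_antisymm : ∀ u v, le u v → le v u → u = v
  le_trans : ∀ u v w, le u v → le v w → le u w
  downChain : ∀ u v w, le u w → le v w → le u v ∨ le v u
  peb : V → Fin k
  cover : ∀ ⦃u v⦄, G.Adj u v → le u v ∨ le v u
  pebbleCond : ∀ ⦃u v w⦄, G.Adj u v → le u v → le u w → le w v → u ≠ w → peb u ≠ peb w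
  heightLE : ∀ v, Set.ncard {u | le u v} ≤ q

def HasPFC {V : Type*} (G : SimpleGraph V) (k q : ℕ) : Prop :=
  Nonempty (PebbleForestCover G k q)

/-- The class `T^k_q` of graphs admitting a `k`-pebble forest cover of depth at most `q`. -/
def Tclass (k q : ℕ) : Set GraphB := {G | HasPFC G.2 k q}

/-! ## Forest covers, treedepth, tree decompositions, treewidth -/

/-- `G` has a forest cover of height at most `q`, i.e. treedepth at most `q`. -/
def HasForestCover {V : Type*} (G : SimpleGraph V) (q : ℕ) : Prop :=
  ∃ le : V → V → Prop,
    (∀ v, le v v) ∧ (∀ u v, le u v → le v u → u = v) ∧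
    (∀ u v w, le u v → le v w → le u w) ∧
    (∀ u v w, le u w → le v w → le u v ∨ le v u) ∧
    (∀ ⦃u v⦄, G.Adj u v → le u v ∨ le v u) ∧
    (∀ v, Set.ncard {u | le u v} ≤ q)

/-- The class `TD_q` of graphs of treedepth at most `q`. -/
def TDclass (q : ℕ) : Set GraphB := {G | HasForestCover G.2 q}

/-- A tree decomposition of `G`. -/
structure TreeDecomp {V : Type*} (G : SimpleGraph V) where
  n : ℕ
  T : SimpleGraph (Fin n)
  isTree : T.IsTree
  bag : Fin n → Set V
  coversVerts : ∀ v : V, ∃ t, v ∈ bag t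
  coversEdges : ∀ ⦃u v⦄, G.Adj u v → ∃ t, u ∈ bag t ∧ v ∈ bag t
  bagsConnected : ∀ v : V, (SimpleGraph.induce {t | v ∈ bag t} T).Connected

/-- The decomposition has width at most `w`. -/
def TreeDecomp.widthLE {V : Type*} {G : SimpleGraph V} (d : TreeDecomp G) (w : ℕ) : Prop :=
  ∀ t, (d.bag t).ncard ≤ w + 1

/-- `t` lies on the (unique) path from `r` to `s` in the tree `d.T`,
i.e. `t` is an ancestor of `s` when `d.T` is rooted at `r`. -/
def TreeDecomp.anc {V : Type*} {G : SimpleGraph V} (d : TreeDecomp G) (r t s : Fin d.n) : Prop :=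
  ∀ w : d.T.Walk r s, t ∈ w.support

/-- The decomposition has depth at most `q`: for some root `r`, for every node `s`,
the union of the bags of ancestors of `s` has at most `q` vertices. -/
def TreeDecomp.depthLE {V : Type*} {G : SimpleGraph V} (d : TreeDecomp G) (q : ℕ) : Prop :=
  ∃ r : Fin d.n, ∀ s : Fin d.n, (⋃ t ∈ {t | d.anc r t s}, d.bag t).ncard ≤ q

/-- The class `TW_w` of graphs of treewidth at most `w`. -/
def TWclass (w : ℕ) : Set GraphB := {G | ∃ d : TreeDecomp G.2, d.widthLE w}

/-! ## Minors and disjoint unions -/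

/-- `H` is a minor of `G`: there are pairwise disjoint connected nonempty branch sets in `G`,
one for each vertex of `H`, such that edges of `H` are realised between branch sets. -/
def IsMinor {W V : Type*} (H : SimpleGraph W) (G : SimpleGraph V) : Prop :=
  ∃ φ : V → Option W,
    (∀ w : W, (SimpleGraph.induce {v | φ v = some w} G).Connected) ∧
    (∀ ⦃w₁ w₂⦄, H.Adj w₁ w₂ → ∃ v₁ v₂, φ v₁ = some w₁ ∧ φ v₂ = some w₂ ∧ G.Adj v₁ v₂)

/-- The disjoint union of two simple graphs. -/
def sumGraph {V W : Type*} (G : SimpleGraph V) (H : SimpleGraph W) : SimpleGraph (V ⊕ W) where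
  Adj x y :=
    match x, y with
    | Sum.inl a, Sum.inl b => G.Adj a b
    | Sum.inr a, Sum.inr b => H.Adj a b
    | _, _ => False
  symm := ⟨by
    rintro (a | a) (b | b) h
    · exact G.adj_symm h
    · exact h.elim
    · exact h.elim
    · exact H.adj_symm h⟩
  loopless := ⟨by
    rintro (a | a) h
    · exact G.irrefl h
    · exact H.irrefl h⟩

/-! ## Cops-and-robber games -/

/-- A robber move from `v` to `u`: a walk in `G` none of whose vertices lies in `A`
(`A` will be `X ∩ Y` for old/new cop positions `X`, `Y` on `G` plus a `k`-clique). -/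
def RobberMove {V : Type*} {k : ℕ} (G : SimpleGraph V) (A : Finset (V ⊕ Fin k)) (v u : V) :
    Prop :=
  ∃ w : G.Walk v u, ∀ x ∈ w.support, Sum.inl x ∉ A

/-- The initial cop position: all `k` cops on the auxiliary clique. -/
def initPos (V : Type*) [DecidableEq V] (k : ℕ) : Finset (V ⊕ Fin k) :=
  Finset.univ.image Sum.inr

/-- In the (non-monotone) cops-and-robber game on `G` with `k` cops, from cop position `X`
and robber position `v`, Cops can catch the robber within `q` further rounds. -/
def CopsCatch {V : Type*} [DecidableEq V] (G : SimpleGraph V) (k : ℕ) :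
    ℕ → Finset (V ⊕ Fin k) → V → Prop
  | 0, _, _ => False
  | q + 1, X, v =>
      ∃ Y : Finset (V ⊕ Fin k), Y.card = k ∧ (X ∩ Y).card = k - 1 ∧
        ∀ u : V, RobberMove G (X ∩ Y) v u → (Sum.inl u ∈ Y ∨ CopsCatch G k q Y u)

/-- Monotone variant: Cops may only move so that the robber escape space does not grow. -/
def MonCopsCatch {V : Type*} [DecidableEq V] (G : SimpleGraph V) (k : ℕ) :
    ℕ → Finset (V ⊕ Fin k) → V → Prop
  | 0, _, _ => False
  | q + 1, X, v =>
      ∃ Y : Finset (V ⊕ Fin k), Y.card = k ∧ (X ∩ Y).card = k - 1 ∧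
        (∀ u : V, RobberMove G (X ∩ Y) v u → RobberMove G X v u) ∧
        ∀ u : V, RobberMove G (X ∩ Y) v u → (Sum.inl u ∈ Y ∨ MonCopsCatch G k q Y u)

/-- Robber can evade capture for `q` further rounds from cop position `X`, robber at `v`. -/
def RobberEsc {V : Type*} [DecidableEq V] (G : SimpleGraph V) (k : ℕ) :
    ℕ → Finset (V ⊕ Fin k) → V → Prop
  | 0, _, _ => True
  | q + 1, X, v =>
      ∀ Y : Finset (V ⊕ Fin k), Y.card = k → (X ∩ Y).card = k - 1 →
        ∃ u : V, RobberMove G (X ∩ Y) v u ∧ Sum.inl u ∉ Y ∧ RobberEsc G k q Y u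

/-- Cops has a winning strategy in the `q`-round `k`-cops-and-robber game on `G`. -/
def CopsWinGame {V : Type*} [DecidableEq V] (G : SimpleGraph V) (k q : ℕ) : Prop :=
  ∀ v : V, CopsCatch G k q (initPos V k) v

/-- Cops has a winning strategy in the monotone `q`-round `k`-cops-and-robber game on `G`. -/
def MonCopsWinGame {V : Type*} [DecidableEq V] (G : SimpleGraph V) (k q : ℕ) : Prop :=
  ∀ v : V, MonCopsCatch G k q (initPos V k) v

/-- Robber has a winning strategy in the `q`-round `k`-cops-and-robber game on `G`. -/
def RobberWinsGame {V : Type*} [DecidableEq V] (G : SimpleGraph V) (k q : ℕ) : Prop :=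
  ∃ v : V, RobberEsc G k q (initPos V k) v

/-- The `h × ℓ` grid graph. -/
def gridGraph (h l : ℕ) : SimpleGraph (Fin h × Fin l) :=
  (SimpleGraph.pathGraph h).boxProd (SimpleGraph.pathGraph l)

/-! ## The CFI-like construction `G_U` -/

/-- Vertices of `G_U`: pairs `(v, S)` with `S` a set of edges incident to `v` whose
parity matches `|{v} ∩ U|`. -/
def CFIvert {V : Type*} (G : SimpleGraph V) (U : Set V) : Type _ :=
  {p : V × Set (Sym2 V) // p.2 ⊆ G.incidenceSet p.1 ∧ (Even p.2.ncard ↔ p.1 ∉ U)}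

/-- The CFI-like graph `G_U` of Roberson. -/
def CFI {V : Type*} (G : SimpleGraph V) (U : Set V) : SimpleGraph (CFIvert G U) where
  Adj x y := G.Adj x.1.1 y.1.1 ∧ s(x.1.1, y.1.1) ∉ symmDiff x.1.2 y.1.2
  symm := ⟨by
    rintro x y ⟨h1, h2⟩
    refine ⟨h1.symm, ?_⟩
    rw [Sym2.eq_swap, symmDiff_comm]
    exact h2⟩
  loopless := ⟨by
    rintro x ⟨h1, _⟩
    exact G.irrefl h1⟩

/-! ## Counting first-order logic -/

/-- Formulae of first-order counting logic `C` with variables indexed by `α`. -/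
inductive CForm (α : Type) : Type
  | eq : α → α → CForm α
  | adj : α → α → CForm α
  | not : CForm α → CForm α
  | or : CForm α → CForm α → CForm α
  | and : CForm α → CForm α → CForm α
  | count : ℕ → α → CForm α → CForm α

namespace CForm

variable {α : Type} [DecidableEq α]

/-- Quantifier rank. -/
def qr : CForm α → ℕ
  | eq _ _ => 0
  | adj _ _ => 0
  | not φ => qr φ
  | or φ ψ => max (qr φ) (qr ψ)
  | and φ ψ => max (qr φ) (qr ψ)
  | count _ _ φ => qr φ + 1

/-- Free variables. -/
def freeVars : CForm α → Finset α
  | eq i j => {i, j}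
  | adj i j => {i, j}
  | not φ => freeVars φ
  | or φ ψ => freeVars φ ∪ freeVars ψ
  | and φ ψ => freeVars φ ∪ freeVars ψ
  | count _ i φ => (freeVars φ).erase i

/-- Satisfaction in a simple graph, relative to a partial variable assignment. -/
def Sat {V : Type*} (G : SimpleGraph V) : CForm α → (α → Option V) → Prop
  | eq i j, a => ∃ v, a i = some v ∧ a j = some v
  | adj i j, a => ∃ v w, a i = some v ∧ a j = some w ∧ G.Adj v w
  | not φ, a => ¬ Sat G φ a
  | or φ ψ, a => Sat G φ a ∨ Sat G ψ a
  | and φ ψ, a => Sat G φ a ∧ Sat G ψ a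
  | count t i φ, a =>
      ∃ s : Finset V, t ≤ s.card ∧ ∀ v ∈ s, Sat G φ (fun j => if j = i then some v else a j)

/-- Guarded formulae: every quantifier occurs as `∃^{≥t} y (E x y ∧ ψ)` with `x ≠ y`. -/
def Guarded : CForm α → Prop
  | count _ y (and (adj x y') χ) => y' = y ∧ x ≠ y ∧ Guarded χ
  | count _ _ _ => False
  | eq _ _ => True
  | adj _ _ => True
  | not φ => Guarded φ
  | or φ ψ => Guarded φ ∧ Guarded ψ
  | and φ ψ => Guarded φ ∧ Guarded ψ

end CForm

/-! ## Labelled graphs, products, construction trees -/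

/-- A `k`-labelled finite graph. -/
structure LGraph (k : ℕ) : Type 1 where
  V : Type
  fin : Finite V
  G : SimpleGraph V
  ν : Fin k → Option V

namespace LGraph

variable {k : ℕ}

/-- Number of homomorphisms between `k`-labelled graphs. -/
noncomputable def lhomCount (F G : LGraph k) : ℕ :=
  Set.ncard {f : F.V → G.V |
    (∀ ⦃u v⦄, F.G.Adj u v → G.G.Adj (f u) (f v)) ∧
    ∀ i v, F.ν i = some v → ∃ w, G.ν i = some w ∧ f v = w}

/-- Remove label `i`. -/
def removeLabel (A : LGraph k) (i : Fin k) : LGraph k :=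
  { A with ν := fun j => if j = i then none else A.ν j }

/-- Every vertex carries at least one label. -/
def FullyLabelled (A : LGraph k) : Prop := ∀ v : A.V, ∃ i, A.ν i = some v

/-- Adjacency on the disjoint sum of two labelled graphs. -/
def sumAdj (A B : LGraph k) : A.V ⊕ B.V → A.V ⊕ B.V → Prop
  | Sum.inl u, Sum.inl v => A.G.Adj u v
  | Sum.inr u, Sum.inr v => B.G.Adj u v
  | _, _ => False

lemma sumAdj_symm (A B : LGraph k) : ∀ x y, sumAdj A B x y → sumAdj A B y x := by
  rintro (u | u) (v | v) h
  · exact A.G.adj_symm h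
  · exact h.elim
  · exact h.elim
  · exact B.G.adj_symm h

/-- The gluing relation: vertices carrying the same label get identified. -/
def glue (A B : LGraph k) : A.V ⊕ B.V → A.V ⊕ B.V → Prop := fun x y =>
  ∃ i : Fin k, (A.ν i).map Sum.inl = some x ∧ (B.ν i).map Sum.inr = some y

/-- The product of two `k`-labelled graphs: disjoint union, identify equally labelled
vertices, suppress loops and parallel edges. -/
def product (A B : LGraph k) : LGraph k where
  V := Quot (glue A B)
  fin := by
    haveI := A.fin
    haveI := B.fin
    exact Finite.of_surjective (Quot.mk _) (fun x => Quot.inductionOn x fun a => ⟨a, rfl⟩)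
  G :=
    { Adj := fun x y =>
        x ≠ y ∧ ∃ u v, Quot.mk _ u = x ∧ Quot.mk _ v = y ∧ sumAdj A B u v
      symm := ⟨by
        rintro x y ⟨hne, u, v, hu, hv, h⟩
        exact ⟨hne.symm, v, u, hv, hu, sumAdj_symm A B u v h⟩⟩
      loopless := ⟨fun x h => h.1 rfl⟩ }
  ν := fun i =>
    ((A.ν i).map fun v => Quot.mk _ (Sum.inl v)).orElse
      fun _ => (B.ν i).map fun v => Quot.mk _ (Sum.inr v)

/-- Isomorphism of labelled graphs. -/
def LIso (A B : LGraph k) : Prop :=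
  ∃ e : A.G ≃g B.G, ∀ i, (A.ν i).map (fun v => e v) = B.ν i

end LGraph

/-- `k`-construction trees: leaves carry (fully labelled) graphs, unary nodes remove
one label, binary nodes take products. -/
inductive CT (k : ℕ) : Type 1
  | leaf : LGraph k → CT k
  | elim : Fin k → CT k → CT k
  | prod : CT k → CT k → CT k

namespace CT

variable {k : ℕ}

/-- The labelled graph constructed by a construction tree. -/
def graphOf : CT k → LGraph k
  | leaf A => A
  | elim i t => (graphOf t).removeLabel i
  | prod t₁ t₂ => (graphOf t₁).product (graphOf t₂)

/-- Validity: leaves are fully labelled and elimination nodes remove an assigned label. -/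
def Valid : CT k → Prop
  | leaf A => A.FullyLabelled
  | elim i t => Valid t ∧ (graphOf t).ν i ≠ none
  | prod t₁ t₂ => Valid t₁ ∧ Valid t₂

/-- Guarded validity: labels may only be removed from vertices with a labelled neighbour. -/
def GuardedValid : CT k → Prop
  | leaf A => A.FullyLabelled
  | elim i t => GuardedValid t ∧
      ∃ v, (graphOf t).ν i = some v ∧
        ∃ j w, (graphOf t).ν j = some w ∧ (graphOf t).G.Adj v w
  | prod t₁ t₂ => GuardedValid t₁ ∧ GuardedValid t₂

/-- The elimination depth: maximal number of elimination nodes on a root-to-leaf path. -/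
def elimDepth : CT k → ℕ
  | leaf _ => 0
  | elim _ t => elimDepth t + 1
  | prod t₁ t₂ => max (elimDepth t₁) (elimDepth t₂)

end CT

/-- The class `L^k_q` of `k`-labelled graphs admitting a `k`-construction tree of
elimination depth at most `q`. -/
def Lclass (k q : ℕ) : Set (LGraph k) :=
  {F | ∃ t : CT k, CT.Valid t ∧ CT.elimDepth t ≤ q ∧ LGraph.LIso (CT.graphOf t) F}

/-- The class `GL^k_q`: as `L^k_q`, but labels may only be removed from vertices with a
labelled neighbour. -/
def GLclass (k q : ℕ) : Set (LGraph k) :=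
  {F | ∃ t : CT k, CT.GuardedValid t ∧ CT.elimDepth t ≤ q ∧ LGraph.LIso (CT.graphOf t) F}

/-- The class `GE^k_q` of unlabelled graphs underlying graphs in `GL^k_q`. -/
def GEclass (k q : ℕ) : Set GraphB :=
  {G | ∃ F ∈ GLclass k q, Nonempty (F.G ≃g G.2)}

/-! ## The bijective pebble game -/

/-- `γ` is a partial isomorphism between `G` and `H`. -/
def PartialIso {V W : Type*} (G : SimpleGraph V) (H : SimpleGraph W) {k : ℕ}
    (γ : Fin k → Option (V × W)) : Prop :=
  ∀ i j vi wi vj wj, γ i = some (vi, wi) → γ j = some (vj, wj) →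
    ((vi = vj ↔ wi = wj) ∧ (G.Adj vi vj ↔ H.Adj wi wj))

/-- Duplicator wins the `q`-round bijective `k`-pebble game on `G` and `H` from position `γ`. -/
def DupWins {V W : Type*} (G : SimpleGraph V) (H : SimpleGraph W) (k : ℕ) :
    ℕ → (Fin k → Option (V × W)) → Prop
  | 0, γ => PartialIso G H γ
  | q + 1, γ => PartialIso G H γ ∧
      ∀ p : Fin k, ∃ f : V ≃ W, ∀ v : V,
        DupWins G H k q (fun j => if j = p then some (v, f v) else γ j)


/-! Induct on the construction tree, showing that for every `m` the property `hom(·, G) = m` is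
expressible with quantifier rank at most the elimination depth. A fully labelled graph has at most
one homomorphism into `G`, and whether it exists is quantifier-free. Removing label `i` turns the
count into `∑_w hom(A, G[i ↦ w])`; this sum equals `m` iff every summand is at most `m` and, for
some `c` with `∑ (j + 1) c_j = m`, exactly `c_j` vertices `w` give the value `j + 1`, which costs
one counting quantifier. A product multiplies the counts, so `hom = m` becomes a disjunction over
the factorisations of `m`. Gluing along labels can identify the two ends of an edge of a factor,
which breaks multiplicativity; hence the induction runs over all spanning subgraphs `H` of the
constructed graph, and for a subgraph `H` of a product the count is the product of the counts of
the traces of `H` on the two factors (the edges of a factor that survive in `H`). -/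

section FiberCounts

variable {W : Type*} [Fintype W]

open Finset in
lemma sum_eq_sum_mul_ncard_fiber {f : W → ℕ} {m : ℕ} (hf : ∀ w, f w ≤ m) :
    ∑ w, f w = ∑ j : Fin m, (j + 1) * {w | f w = j + 1}.ncard := by
  classical
  calc ∑ w, f w = ∑ n ∈ range (m + 1), ∑ w with f w = n, f w :=
        (sum_fiberwise_of_maps_to (fun w _ => mem_range.2 (Nat.lt_succ_of_le (hf w))) f).symm
    _ = ∑ n ∈ range (m + 1), n * {w | f w = n}.ncard := by
        refine sum_congr rfl fun n _ => ?_
        rw [sum_congr rfl fun w hw => (mem_filter.1 hw).2, sum_const, smul_eq_mul, mul_comm,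
          Set.ncard_eq_toFinset_card']
        simp
    _ = ∑ j : Fin m, (j + 1) * {w | f w = j + 1}.ncard := by
        rw [sum_range_succ', Fin.sum_univ_eq_sum_range (fun j => (j + 1) * {w | f w = j + 1}.ncard)]
        simp

lemma sum_eq_iff_exists_ncard_fiber (f : W → ℕ) (m : ℕ) :
    ∑ w, f w = m ↔ (∀ w, f w ≤ m) ∧ ∃ c : Fin m → Fin (m + 1),
      ∑ j : Fin m, (j + 1) * (c j : ℕ) = m ∧ ∀ j : Fin m, {w | f w = j + 1}.ncard = c j := by
  constructor
  · intro hsum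
    have hf : ∀ w, f w ≤ m := fun w =>
      hsum ▸ Finset.single_le_sum (fun _ _ => Nat.zero_le _) (Finset.mem_univ w)
    have hfiber : ∀ j : Fin m, {w | f w = j + 1}.ncard < m + 1 := fun j => by
      have hle := Finset.single_le_sum (f := fun j : Fin m => (j + 1) * {w | f w = j + 1}.ncard)
        (fun _ _ => Nat.zero_le _) (Finset.mem_univ j)
      rw [← sum_eq_sum_mul_ncard_fiber hf, hsum] at hle
      nlinarith
    exact ⟨hf, fun j => ⟨_, hfiber j⟩, (sum_eq_sum_mul_ncard_fiber hf).symm.trans hsum,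
      fun _ => rfl⟩
  · rintro ⟨hf, c, hc, hfiber⟩
    simp only [sum_eq_sum_mul_ncard_fiber hf, hfiber, hc]

end FiberCounts

namespace CForm

variable {α : Type}

section Connectives

variable [Inhabited α]

def fls : CForm α := and (eq default default) (not (eq default default))

def tru : CForm α := not fls

def bigAnd : List (CForm α) → CForm α
  | [] => tru
  | φ :: l => and φ (bigAnd l)

def bigOr : List (CForm α) → CForm α
  | [] => fls
  | φ :: l => or φ (bigOr l)

lemma qr_bigAnd_le {l : List (CForm α)} {d : ℕ} (h : ∀ φ ∈ l, qr φ ≤ d) : qr (bigAnd l) ≤ d := by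
  induction l with
  | nil => simp [bigAnd, tru, fls, qr]
  | cons φ l ih => simp_all [bigAnd, qr]

lemma qr_bigOr_le {l : List (CForm α)} {d : ℕ} (h : ∀ φ ∈ l, qr φ ≤ d) : qr (bigOr l) ≤ d := by
  induction l with
  | nil => simp [bigOr, fls, qr]
  | cons φ l ih => simp_all [bigOr, qr]

variable [DecidableEq α] {V : Type*} (G : SimpleGraph V) (a : α → Option V)

@[simp] lemma sat_fls : ¬ Sat G fls a := fun h => h.2 h.1

@[simp] lemma sat_tru : Sat G tru a := sat_fls G a

@[simp] lemma sat_bigAnd (l : List (CForm α)) : Sat G (bigAnd l) a ↔ ∀ φ ∈ l, Sat G φ a := by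
  induction l with
  | nil => simp [bigAnd]
  | cons φ l ih => simp [bigAnd, Sat, ih]

@[simp] lemma sat_bigOr (l : List (CForm α)) : Sat G (bigOr l) a ↔ ∃ φ ∈ l, Sat G φ a := by
  induction l with
  | nil => simp [bigOr]
  | cons φ l ih => simp [bigOr, Sat, ih]

end Connectives

def all (i : α) (φ : CForm α) : CForm α := not (count 1 i (not φ))

def exactly (n : ℕ) (i : α) (φ : CForm α) : CForm α := and (count n i φ) (not (count (n + 1) i φ))

section Quantifiers

variable [DecidableEq α] {V : Type*} (G : SimpleGraph V) (a : α → Option V)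

lemma sat_all (i : α) (φ : CForm α) :
    Sat G (all i φ) a ↔ ∀ v, Sat G φ (fun j => if j = i then some v else a j) := by
  simp only [all, Sat, Finset.one_le_card]
  constructor
  · intro h v
    by_contra hv
    exact h ⟨{v}, Finset.singleton_nonempty v, by simpa using hv⟩
  · rintro h ⟨s, ⟨v, hv⟩, hs⟩
    exact hs v hv (h v)

lemma sat_count_iff [Finite V] (n : ℕ) (i : α) (φ : CForm α) :
    Sat G (count n i φ) a ↔ n ≤ {v | Sat G φ (fun j => if j = i then some v else a j)}.ncard := by
  set S := {v | Sat G φ (fun j => if j = i then some v else a j)}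
  constructor
  · rintro ⟨s, hs, hsS⟩
    calc n ≤ s.card := hs
      _ = (s : Set V).ncard := (Set.ncard_coe_finset s).symm
      _ ≤ S.ncard := Set.ncard_le_ncard hsS
  · intro h
    exact ⟨S.toFinite.toFinset, by rwa [← Set.ncard_eq_toFinset_card], by simp [S]⟩

lemma sat_exactly_iff [Finite V] (n : ℕ) (i : α) (φ : CForm α) :
    Sat G (exactly n i φ) a ↔ {v | Sat G φ (fun j => if j = i then some v else a j)}.ncard = n := by
  have hn := sat_count_iff G a n i φ
  have hn1 := sat_count_iff G a (n + 1) i φ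
  simp only [exactly, Sat] at hn hn1 ⊢
  rw [hn, hn1]
  omega

end Quantifiers

section Arithmetic

variable [Inhabited α]

def mulEq (Φ Ψ : ℕ → CForm α) : ℕ → CForm α
  | 0 => or (Φ 0) (Ψ 0)
  | m + 1 => bigOr ((m + 1).divisorsAntidiagonalList.map fun p => and (Φ p.1) (Ψ p.2))

noncomputable def sumEq (i : α) (Φ : ℕ → CForm α) (m : ℕ) : CForm α :=
  and (all i (bigOr ((List.range (m + 1)).map Φ)))
    (bigOr ((Finset.univ.filter fun c : Fin m → Fin (m + 1) =>
        ∑ j : Fin m, (j + 1) * (c j : ℕ) = m).toList.map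
      fun c => bigAnd ((List.finRange m).map fun j : Fin m => exactly (c j) i (Φ (j + 1)))))

lemma qr_mulEq_le {Φ Ψ : ℕ → CForm α} {d : ℕ} (hΦ : ∀ n, qr (Φ n) ≤ d)
    (hΨ : ∀ n, qr (Ψ n) ≤ d) : ∀ m, qr (mulEq Φ Ψ m) ≤ d
  | 0 => max_le (hΦ 0) (hΨ 0)
  | _ + 1 => qr_bigOr_le fun φ hφ => by
      obtain ⟨p, -, rfl⟩ := List.mem_map.1 hφ
      exact max_le (hΦ p.1) (hΨ p.2)

lemma qr_sumEq_le (i : α) {Φ : ℕ → CForm α} {d : ℕ} (hΦ : ∀ n, qr (Φ n) ≤ d) (m : ℕ) :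
    qr (sumEq i Φ m) ≤ d + 1 := by
  refine max_le (Nat.succ_le_succ (qr_bigOr_le fun φ hφ => ?_)) (qr_bigOr_le fun φ hφ => ?_)
  · obtain ⟨n, -, rfl⟩ := List.mem_map.1 hφ
    exact hΦ n
  · obtain ⟨c, -, rfl⟩ := List.mem_map.1 hφ
    refine qr_bigAnd_le fun ψ hψ => ?_
    obtain ⟨j, -, rfl⟩ := List.mem_map.1 hψ
    exact max_le (Nat.succ_le_succ (hΦ _)) (Nat.succ_le_succ (hΦ _))

variable [DecidableEq α] {V : Type*} (G : SimpleGraph V) (a : α → Option V)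

lemma sat_mulEq {Φ Ψ : ℕ → CForm α} {x y : ℕ} (hΦ : ∀ n, Sat G (Φ n) a ↔ x = n)
    (hΨ : ∀ n, Sat G (Ψ n) a ↔ y = n) : ∀ m, Sat G (mulEq Φ Ψ m) a ↔ x * y = m
  | 0 => by simp [mulEq, Sat, hΦ, hΨ]
  | m + 1 => by simp [mulEq, Sat, hΦ, hΨ, Nat.mem_divisorsAntidiagonalList]

lemma sat_sumEq [Fintype V] {i : α} {Φ : ℕ → CForm α} {f : V → ℕ}
    (hΦ : ∀ v n, Sat G (Φ n) (fun j => if j = i then some v else a j) ↔ f v = n) (m : ℕ) :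
    Sat G (sumEq i Φ m) a ↔ ∑ v, f v = m := by
  rw [sum_eq_iff_exists_ncard_fiber]
  simp [sumEq, Sat, sat_all, sat_exactly_iff, hΦ]

end Arithmetic

end CForm

namespace LGraph

variable {k : ℕ}

def IsLabelledHom (F G : LGraph k) (f : F.V → G.V) : Prop :=
  (∀ ⦃u v⦄, F.G.Adj u v → G.G.Adj (f u) (f v)) ∧ ∀ i v, F.ν i = some v → G.ν i = some (f v)

lemma lhomCount_eq_card (F G : LGraph k) :
    F.lhomCount G = Nat.card {f // F.IsLabelledHom G f} := by
  rw [lhomCount, ← Nat.card_coe_set_eq]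
  congr! 3 with f
  simp [IsLabelledHom, eq_comm]

lemma lhomCount_eq_of_LIso {A B : LGraph k} (h : A.LIso B) (G : LGraph k) :
    A.lhomCount G = B.lhomCount G := by
  obtain ⟨e, he⟩ := h
  simp only [lhomCount_eq_card]
  refine (Nat.card_congr ((e.toEquiv.symm.arrowCongr (Equiv.refl G.V)).subtypeEquiv
    fun g => ?_)).symm
  have hcomp : ∀ v, e.toEquiv.symm.arrowCongr (Equiv.refl G.V) g v = g (e v) := by
    simp [Equiv.arrowCongr]
  simp only [IsLabelledHom, hcomp]
  constructor
  · rintro ⟨hadj, hlab⟩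
    exact ⟨fun u v huv => hadj (e.map_adj_iff.2 huv),
      fun i v hv => hlab i (e v) (by rw [← he i, hv]; rfl)⟩
  · rintro ⟨hadj, hlab⟩
    refine ⟨fun u v huv => by simpa using hadj (e.symm.map_adj_iff.2 huv), fun i w hw => ?_⟩
    rw [← he i, Option.map_eq_some_iff] at hw
    obtain ⟨v, hv, rfl⟩ := hw
    exact hlab i v hv

def withGraph (A : LGraph k) (H : SimpleGraph A.V) : LGraph k := { A with G := H }

def setLabel (G : LGraph k) (i : Fin k) (w : G.V) : LGraph k :=
  { G with ν := fun j => if j = i then some w else G.ν j }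

lemma isLabelledHom_setLabel_iff {A G : LGraph k} {i : Fin k} {v₀ : A.V} (h : A.ν i = some v₀)
    (w : G.V) (f : A.V → G.V) :
    A.IsLabelledHom (G.setLabel i w) f ↔ (A.removeLabel i).IsLabelledHom G f ∧ f v₀ = w := by
  simp only [IsLabelledHom, setLabel, removeLabel, and_assoc]
  refine and_congr_right fun _ => ⟨fun hlab => ⟨fun j v hv => ?_, ?_⟩, ?_⟩
  · split_ifs at hv with hj
    simpa [hj] using hlab j v hv
  · simpa [eq_comm] using hlab i v₀ h
  · rintro ⟨hlab, rfl⟩ j v hv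
    split_ifs with hj
    · subst hj
      rw [h] at hv
      cases hv
      rfl
    · simpa [hj] using hlab j v (by rwa [if_neg hj])

lemma lhomCount_removeLabel {A : LGraph k} {i : Fin k} {v₀ : A.V} (h : A.ν i = some v₀)
    (G : LGraph k) [Fintype G.V] :
    (A.removeLabel i).lhomCount G = ∑ w, A.lhomCount (G.setLabel i w) := by
  have : Finite (A.removeLabel i).V := A.fin
  simp only [lhomCount_eq_card]
  rw [← Nat.card_congr (Equiv.sigmaFiberEquiv
    fun f : {f // (A.removeLabel i).IsLabelledHom G f} => f.1 v₀), Nat.card_sigma]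
  refine Finset.sum_congr rfl fun w _ => Nat.card_congr ?_
  exact (Equiv.subtypeSubtypeEquivSubtypeInter _ (fun f => f v₀ = w)).trans
    (Equiv.subtypeEquivRight fun f => (isLabelledHom_setLabel_iff h w f).symm)

open Classical in
noncomputable def atomicDiagram [NeZero k] (A : LGraph k) : CForm (Fin k) :=
  CForm.and
    (CForm.bigAnd ((Finset.univ.filter fun p : Fin k × Fin k =>
        ∃ v, A.ν p.1 = some v ∧ A.ν p.2 = some v).toList.map fun p => CForm.eq p.1 p.2))
    (CForm.bigAnd ((Finset.univ.filter fun p : Fin k × Fin k =>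
        ∃ v w, A.ν p.1 = some v ∧ A.ν p.2 = some w ∧ A.G.Adj v w).toList.map
      fun p => CForm.adj p.1 p.2))

lemma qr_atomicDiagram [NeZero k] (A : LGraph k) : A.atomicDiagram.qr = 0 :=
  Nat.le_zero.1 <| max_le
    (CForm.qr_bigAnd_le fun _ hφ => by obtain ⟨_, -, rfl⟩ := List.mem_map.1 hφ; exact le_rfl)
    (CForm.qr_bigAnd_le fun _ hφ => by obtain ⟨_, -, rfl⟩ := List.mem_map.1 hφ; exact le_rfl)

lemma sat_atomicDiagram [NeZero k] (A G : LGraph k) :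
    CForm.Sat G.G A.atomicDiagram G.ν ↔
      (∀ i j v, A.ν i = some v → A.ν j = some v → ∃ w, G.ν i = some w ∧ G.ν j = some w) ∧
      ∀ i j v w, A.ν i = some v → A.ν j = some w → A.G.Adj v w →
        ∃ x y, G.ν i = some x ∧ G.ν j = some y ∧ G.G.Adj x y := by
  simp only [atomicDiagram, CForm.Sat, CForm.sat_bigAnd, List.forall_mem_map, Finset.mem_toList,
    Finset.mem_filter, Finset.mem_univ, true_and, Prod.forall, forall_exists_index, and_imp]

lemma IsLabelledHom.eq_of_fullyLabelled {A G : LGraph k} (hA : A.FullyLabelled)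
    {f g : A.V → G.V} (hf : A.IsLabelledHom G f) (hg : A.IsLabelledHom G g) : f = g := by
  funext v
  obtain ⟨i, hi⟩ := hA v
  exact Option.some_injective _ ((hf.2 i v hi).symm.trans (hg.2 i v hi))

lemma exists_isLabelledHom_iff_sat [NeZero k] {A : LGraph k} (hA : A.FullyLabelled)
    (G : LGraph k) : (∃ f, A.IsLabelledHom G f) ↔ CForm.Sat G.G A.atomicDiagram G.ν := by
  rw [sat_atomicDiagram]
  constructor
  · rintro ⟨f, hadj, hlab⟩
    exact ⟨fun i j v hi hj => ⟨f v, hlab i v hi, hlab j v hj⟩,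
      fun i j v w hi hj hvw => ⟨f v, f w, hlab i v hi, hlab j w hj, hadj hvw⟩⟩
  · rintro ⟨heq, hadj⟩
    choose ℓ hℓ using hA
    choose f hf using fun v => heq (ℓ v) (ℓ v) v (hℓ v) (hℓ v)
    have hlab : ∀ i v, A.ν i = some v → G.ν i = some (f v) := fun i v hi => by
      obtain ⟨w, hwi, hwℓ⟩ := heq i (ℓ v) v hi (hℓ v)
      rw [hwi, ← hwℓ, (hf v).1]
    refine ⟨f, fun u v huv => ?_, hlab⟩
    obtain ⟨x, y, hx, hy, hxy⟩ := hadj _ _ u v (hℓ u) (hℓ v) huv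
    rw [hlab _ u (hℓ u), Option.some_inj] at hx
    rw [hlab _ v (hℓ v), Option.some_inj] at hy
    rwa [hx, hy]

open Classical in
lemma lhomCount_of_fullyLabelled [NeZero k] {A : LGraph k} (hA : A.FullyLabelled)
    (G : LGraph k) : A.lhomCount G = if CForm.Sat G.G A.atomicDiagram G.ν then 1 else 0 := by
  rw [lhomCount_eq_card, ← exists_isLabelledHom_iff_sat hA]
  split_ifs with h
  · obtain ⟨f, hf⟩ := h
    refine Nat.card_eq_one_iff_exists.2 ⟨⟨f, hf⟩, fun g => Subtype.ext ?_⟩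
    exact g.2.eq_of_fullyLabelled hA hf
  · exact Nat.card_eq_zero.2 (Or.inl ⟨fun f => h ⟨f.1, f.2⟩⟩)

section Product

variable {A B : LGraph k}

def productInl (A B : LGraph k) (a : A.V) : (A.product B).V := Quot.mk _ (Sum.inl a)

def productInr (A B : LGraph k) (b : B.V) : (A.product B).V := Quot.mk _ (Sum.inr b)

def traceLeft (H : SimpleGraph (A.product B).V) : SimpleGraph A.V :=
  A.G ⊓ H.comap (productInl A B)

def traceRight (H : SimpleGraph (A.product B).V) : SimpleGraph B.V :=
  B.G ⊓ H.comap (productInr A B)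

lemma product_ν_of_left {i : Fin k} {a : A.V} (h : A.ν i = some a) :
    (A.product B).ν i = some (productInl A B a) := by
  simp [product, h, productInl]

lemma product_ν_of_right {i : Fin k} {b : B.V} (h : B.ν i = some b) :
    (A.product B).ν i = some (productInr A B b) := by
  rcases ha : A.ν i with _ | a
  · simp [product, ha, h, productInr]
  · rw [product_ν_of_left ha]
    exact congrArg some (Quot.sound ⟨i, by simp [ha], by simp [h]⟩)

lemma product_ν_eq_some {i : Fin k} {X : (A.product B).V} (h : (A.product B).ν i = some X) :
    (∃ a, A.ν i = some a ∧ productInl A B a = X) ∨ ∃ b, B.ν i = some b ∧ productInr A B b = X := by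
  rcases ha : A.ν i with _ | a
  · rcases hb : B.ν i with _ | b
    · simp [product, ha, hb] at h
    · exact Or.inr ⟨b, rfl, Option.some_injective _ ((product_ν_of_right hb).symm.trans h)⟩
  · exact Or.inl ⟨a, rfl, Option.some_injective _ ((product_ν_of_left ha).symm.trans h)⟩

lemma labels_product_iff {W : Type*} (ν : Fin k → Option W) (f : (A.product B).V → W) :
    (∀ i X, (A.product B).ν i = some X → ν i = some (f X)) ↔
      (∀ i a, A.ν i = some a → ν i = some (f (productInl A B a))) ∧
      ∀ i b, B.ν i = some b → ν i = some (f (productInr A B b)) := by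
  refine ⟨fun hf => ⟨fun i a ha => hf i _ (product_ν_of_left ha),
    fun i b hb => hf i _ (product_ν_of_right hb)⟩, ?_⟩
  rintro ⟨hA, hB⟩ i X hX
  rcases product_ν_eq_some hX with ⟨a, ha, rfl⟩ | ⟨b, hb, rfl⟩
  exacts [hA i a ha, hB i b hb]

lemma adj_product_iff {H : SimpleGraph (A.product B).V} (hH : H ≤ (A.product B).G)
    {W : Type*} (K : SimpleGraph W) (f : (A.product B).V → W) :
    (∀ ⦃X Y⦄, H.Adj X Y → K.Adj (f X) (f Y)) ↔
      (∀ ⦃a a'⦄, (traceLeft H).Adj a a' → K.Adj (f (productInl A B a)) (f (productInl A B a'))) ∧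
      ∀ ⦃b b'⦄, (traceRight H).Adj b b' → K.Adj (f (productInr A B b)) (f (productInr A B b')) := by
  refine ⟨fun hf => ⟨fun a a' h => hf h.2, fun b b' h => hf h.2⟩, ?_⟩
  rintro ⟨hA, hB⟩ X Y hXY
  obtain ⟨-, u, v, rfl, rfl, huv⟩ := hH hXY
  rcases u with a | b <;> rcases v with a' | b'
  · exact hA ⟨huv, hXY⟩
  · exact huv.elim
  · exact huv.elim
  · exact hB ⟨huv, hXY⟩

lemma sumElim_eq_of_glue {W : Type*} {ν : Fin k → Option W} {g : A.V → W} {h : B.V → W}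
    (hg : ∀ i a, A.ν i = some a → ν i = some (g a)) (hh : ∀ i b, B.ν i = some b → ν i = some (h b))
    {x y : A.V ⊕ B.V} (hxy : glue A B x y) : Sum.elim g h x = Sum.elim g h y := by
  obtain ⟨i, hx, hy⟩ := hxy
  rw [Option.map_eq_some_iff] at hx hy
  obtain ⟨a, ha, rfl⟩ := hx
  obtain ⟨b, hb, rfl⟩ := hy
  exact Option.some_injective _ ((hg i a ha).symm.trans (hh i b hb))

lemma isLabelledHom_product_iff {H : SimpleGraph (A.product B).V} (hH : H ≤ (A.product B).G)
    (G : LGraph k) (f : (A.product B).V → G.V) :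
    ((A.product B).withGraph H).IsLabelledHom G f ↔
      (A.withGraph (traceLeft H)).IsLabelledHom G (f ∘ productInl A B) ∧
      (B.withGraph (traceRight H)).IsLabelledHom G (f ∘ productInr A B) := by
  simp only [IsLabelledHom, withGraph, Function.comp_apply]
  rw [adj_product_iff hH, labels_product_iff]
  exact and_and_and_comm

lemma lhomCount_product_withGraph {H : SimpleGraph (A.product B).V} (hH : H ≤ (A.product B).G)
    (G : LGraph k) :
    ((A.product B).withGraph H).lhomCount G =
      (A.withGraph (traceLeft H)).lhomCount G * (B.withGraph (traceRight H)).lhomCount G := by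
  simp only [lhomCount_eq_card, ← Nat.card_prod]
  refine Nat.card_congr
    { toFun := fun f => (⟨_, ((isLabelledHom_product_iff hH G f.1).1 f.2).1⟩,
        ⟨_, ((isLabelledHom_product_iff hH G f.1).1 f.2).2⟩)
      invFun := fun p => ⟨Quot.lift (Sum.elim p.1.1 p.2.1) fun _ _ =>
          sumElim_eq_of_glue p.1.2.2 p.2.2.2, (isLabelledHom_product_iff hH G _).2 ⟨p.1.2, p.2.2⟩⟩
      left_inv := fun f => Subtype.ext (funext (Quot.ind (by rintro (a | b) <;> rfl)))
      right_inv := fun p => rfl }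

end Product

end LGraph

def HomCountDefinable {k : ℕ} (q : ℕ) (A : LGraph k) : Prop :=
  ∃ Φ : ℕ → CForm (Fin k), (∀ n, (Φ n).qr ≤ q) ∧
    ∀ (G : LGraph k) (n : ℕ), CForm.Sat G.G (Φ n) G.ν ↔ A.lhomCount G = n

namespace HomCountDefinable

variable {k q : ℕ} {A : LGraph k}

lemma mono {q' : ℕ} (h : HomCountDefinable q A) (hq : q ≤ q') : HomCountDefinable q' A :=
  let ⟨Φ, hqr, hΦ⟩ := h
  ⟨Φ, fun n => (hqr n).trans hq, hΦ⟩

lemma of_lhomCount_eq {B : LGraph k} (h : HomCountDefinable q A)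
    (hAB : ∀ G, A.lhomCount G = B.lhomCount G) : HomCountDefinable q B :=
  let ⟨Φ, hqr, hΦ⟩ := h
  ⟨Φ, hqr, fun G n => hAB G ▸ hΦ G n⟩

lemma of_fullyLabelled [NeZero k] (hA : A.FullyLabelled) : HomCountDefinable 0 A := by
  refine ⟨fun | 0 => .not A.atomicDiagram | 1 => A.atomicDiagram | _ + 2 => CForm.fls,
    fun | 0 | 1 => A.qr_atomicDiagram.le | _ + 2 => rfl.le, fun G n => ?_⟩
  rw [LGraph.lhomCount_of_fullyLabelled hA]
  rcases n with _ | _ | n <;> by_cases h : CForm.Sat G.G A.atomicDiagram G.ν <;> simp [h, CForm.Sat]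

lemma removeLabel [NeZero k] (h : HomCountDefinable q A) {i : Fin k} (hi : A.ν i ≠ none) :
    HomCountDefinable (q + 1) (A.removeLabel i) := by
  obtain ⟨Φ, hqr, hΦ⟩ := h
  obtain ⟨v₀, hv₀⟩ := Option.ne_none_iff_exists'.1 hi
  refine ⟨CForm.sumEq i Φ, CForm.qr_sumEq_le i hqr, fun G m => ?_⟩
  have := G.fin
  have := Fintype.ofFinite G.V
  rw [LGraph.lhomCount_removeLabel hv₀]
  exact CForm.sat_sumEq G.G G.ν (fun w n => hΦ (G.setLabel i w) n) m

lemma of_lhomCount_eq_mul [NeZero k] {A₁ A₂ : LGraph k} (h₁ : HomCountDefinable q A₁)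
    (h₂ : HomCountDefinable q A₂) (hA : ∀ G, A.lhomCount G = A₁.lhomCount G * A₂.lhomCount G) :
    HomCountDefinable q A := by
  obtain ⟨Φ₁, hqr₁, hΦ₁⟩ := h₁
  obtain ⟨Φ₂, hqr₂, hΦ₂⟩ := h₂
  refine ⟨CForm.mulEq Φ₁ Φ₂, CForm.qr_mulEq_le hqr₁ hqr₂, fun G m => ?_⟩
  rw [hA]
  exact CForm.sat_mulEq G.G G.ν (hΦ₁ G) (hΦ₂ G) m

end HomCountDefinable

theorem CT.homCountDefinable_withGraph {k : ℕ} [NeZero k] :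
    ∀ t : CT k, t.Valid → ∀ H ≤ t.graphOf.G,
      HomCountDefinable t.elimDepth (t.graphOf.withGraph H)
  | .leaf _, hA, _, _ => HomCountDefinable.of_fullyLabelled hA
  | .elim _ t, ⟨ht, hi⟩, H, hH => (homCountDefinable_withGraph t ht H hH).removeLabel hi
  | .prod t₁ t₂, ⟨ht₁, ht₂⟩, _, hH =>
      HomCountDefinable.of_lhomCount_eq_mul
        ((homCountDefinable_withGraph t₁ ht₁ _ inf_le_left).mono (le_max_left _ _))
        ((homCountDefinable_withGraph t₂ ht₂ _ inf_le_left).mono (le_max_right _ _))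
        (LGraph.lhomCount_product_withGraph hH)

theorem homcounts_in_ckq_general (k q : ℕ) (hk : 1 ≤ k) (F : LGraph k)
    (hF : F ∈ Lclass k q) (m : ℕ) :
    ∃ φ : CForm (Fin k), CForm.qr φ ≤ q ∧
      ∀ G : LGraph k, (∀ i, (F.ν i).isSome → (G.ν i).isSome) →
        (CForm.Sat G.G φ G.ν ↔ LGraph.lhomCount F G = m) := by
  have : NeZero k := ⟨by omega⟩
  obtain ⟨t, ht, hdepth, hiso⟩ := hF
  obtain ⟨Φ, hqr, hΦ⟩ := ((t.homCountDefinable_withGraph ht _ le_rfl).mono hdepth).of_lhomCount_eq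
    (LGraph.lhomCount_eq_of_LIso hiso)
  exact ⟨Φ m, hqr m, fun G _ => hΦ G m⟩

/-- For `F ∈ L^k_q` and `m ≥ 0` there is a `C^k_q`-formula `φ_m` such that for every
appropriately labelled `G`: `G ⊨ φ_m` iff `hom(F,G) = m`. -/
theorem homcounts_in_ckq (k q : ℕ) (hk : 1 ≤ k) (hq : 1 ≤ q) (F : LGraph k)
    (hF : F ∈ Lclass k q) (m : ℕ) :
    ∃ φ : CForm (Fin k), CForm.qr φ ≤ q ∧
      ∀ G : LGraph k, (∀ i, (F.ν i).isSome → (G.ν i).isSome) →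
        (CForm.Sat G.G φ G.ν ↔ LGraph.lhomCount F G = m) :=
  homcounts_in_ckq_general k q hk F hF m
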